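/- Let K be a real Lie algebra and ∂ : K* → K a linear map that is symmetric and K-invariant. Define the double bracket ⁅(γ,k),(γ',k')⁆ := (k·γ' − k'·γ + (∂γ)·γ', [k,k']) and the pairing ⟨(γ,k),(γ',k')⟩ := (1/2)(γ(k') + γ'(k) + γ(∂γ')) on K* × K. Then the pairing is symmetric and invariant, i.e., ⟨⁅e1,e2⁆, e3⟩ + ⟨e2, ⁅e1,e3⁆⟩ = 0 for all e1, e2, e3 ∈ K* × K; moreover, if K is finite-dimensional, the pairing is nondegenerate. In particular, K* × K is then a quadratic Lie algebra. -/

import Mathlib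

open Module

/-- The coadjoint action of `k ∈ K` on `γ ∈ K*`: `(k·γ)(x) = -γ ⁅k, x⁆`. -/
def coad {K : Type*} [LieRing K] [LieAlgebra ℝ K] (k : K) (γ : Dual ℝ K) :
    Dual ℝ K :=
  -(γ ∘ₗ (LieAlgebra.ad ℝ K k))

/-- The double bracket on `K* × K` induced by a symmetric `K`-invariant map `δ : K* → K`. -/
def dblBracket {K : Type*} [LieRing K] [LieAlgebra ℝ K] (δ : Dual ℝ K →ₗ[ℝ] K)
    (e f : Dual ℝ K × K) : Dual ℝ K × K :=
  (coad e.2 f.1 - coad f.2 e.1 + coad (δ e.1) f.1, ⁅e.2, f.2⁆)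

/-- The pairing on `K* × K`: `⟨(γ,k),(γ',k')⟩ = (1/2)(γ(k') + γ'(k) + γ(δγ'))`. -/
noncomputable def dblPairing {K : Type*} [LieRing K] [LieAlgebra ℝ K] (δ : Dual ℝ K →ₗ[ℝ] K)
    (e f : Dual ℝ K × K) : ℝ :=
  (1 / 2) * (e.1 f.2 + f.1 e.2 + e.1 (δ f.1))

section DoubleBracket

variable {K : Type*} [LieRing K] [LieAlgebra ℝ K]

@[simp]
lemma coad_apply (k : K) (γ : Dual ℝ K) (x : K) : coad k γ x = -γ ⁅k, x⁆ := rfl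

lemma Module.Dual.apply_lie_swap (γ : Dual ℝ K) (x y : K) : γ ⁅x, y⁆ = -γ ⁅y, x⁆ := by
  rw [← lie_skew, map_neg]

variable (δ : Dual ℝ K →ₗ[ℝ] K)

lemma dblPairing_comm (hsym : ∀ γ γ' : Dual ℝ K, γ' (δ γ) = γ (δ γ'))
    (e f : Dual ℝ K × K) : dblPairing δ e f = dblPairing δ f e := by
  simp only [dblPairing, hsym f.1 e.1]
  ring

lemma two_mul_dblPairing_dblBracket (e₁ e₂ e₃ : Dual ℝ K × K) :
    2 * dblPairing δ (dblBracket δ e₁ e₂) e₃ =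
      e₃.1 ⁅e₁.2, e₂.2⁆ - e₂.1 ⁅e₁.2, e₃.2⁆ + e₁.1 ⁅e₂.2, e₃.2⁆
        + e₂.1 ⁅e₃.2, δ e₁.1⁆ + e₁.1 ⁅e₂.2, δ e₃.1⁆ - e₂.1 ⁅e₁.2, δ e₃.1⁆
        - e₂.1 ⁅δ e₁.1, δ e₃.1⁆ := by
  rw [e₂.1.apply_lie_swap e₃.2]
  simp only [dblPairing, dblBracket, LinearMap.add_apply, LinearMap.sub_apply, coad_apply]
  ring

lemma dblPairing_dblBracket_add_dblPairing_dblBracket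
    (hsym : ∀ γ γ' : Dual ℝ K, γ' (δ γ) = γ (δ γ'))
    (hinv : ∀ (k : K) (γ γ' : Dual ℝ K), γ ⁅k, δ γ'⁆ + γ' ⁅k, δ γ⁆ = 0)
    (e₁ e₂ e₃ : Dual ℝ K × K) :
    dblPairing δ (dblBracket δ e₁ e₂) e₃ + dblPairing δ e₂ (dblBracket δ e₁ e₃) = 0 := by
  -- By symmetry both terms have the shape of `two_mul_dblPairing_dblBracket`; the two expansions
  -- cancel in pairs, by skew-symmetry of the bracket and `K`-invariance of `δ` at
  -- `e₁.2`, `e₂.2`, `e₃.2` and `δ e₁.1`.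
  rw [dblPairing_comm δ hsym e₂]
  have h₂₃ := two_mul_dblPairing_dblBracket δ e₁ e₂ e₃
  have h₃₂ := two_mul_dblPairing_dblBracket δ e₁ e₃ e₂
  linarith [e₁.1.apply_lie_swap e₂.2 e₃.2, hinv e₁.2 e₂.1 e₃.1, hinv e₂.2 e₁.1 e₃.1,
    hinv e₃.2 e₁.1 e₂.1, hinv (δ e₁.1) e₂.1 e₃.1]

lemma eq_zero_of_forall_dblPairing_eq_zero {e : Dual ℝ K × K}
    (he : ∀ f : Dual ℝ K × K, dblPairing δ e f = 0) : e = 0 := by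
  have hγ : e.1 = 0 := by
    ext k
    simpa [dblPairing] using he (0, k)
  have hk : e.2 = 0 := by
    rw [← Module.forall_dual_apply_eq_zero_iff ℝ e.2]
    intro γ
    simpa [dblPairing, hγ] using he (γ, 0)
  exact Prod.ext hγ hk

end DoubleBracket

theorem stmt4 {K : Type*} [LieRing K] [LieAlgebra ℝ K]
    (δ : Dual ℝ K →ₗ[ℝ] K)
    (hsym : ∀ γ γ' : Dual ℝ K, γ' (δ γ) = γ (δ γ'))
    (hinv : ∀ (k : K) (γ γ' : Dual ℝ K), γ ⁅k, δ γ'⁆ + γ' ⁅k, δ γ⁆ = 0) :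
    -- the pairing is symmetric
    (∀ e f : Dual ℝ K × K, dblPairing δ e f = dblPairing δ f e) ∧
    -- the pairing is invariant
    (∀ e1 e2 e3 : Dual ℝ K × K,
        dblPairing δ (dblBracket δ e1 e2) e3 + dblPairing δ e2 (dblBracket δ e1 e3) = 0) ∧
    -- if K is finite dimensional, the pairing is nondegenerate
    (FiniteDimensional ℝ K →
      ∀ e : Dual ℝ K × K, (∀ f : Dual ℝ K × K, dblPairing δ e f = 0) → e = 0) :=
  ⟨dblPairing_comm δ hsym, dblPairing_dblBracket_add_dblPairing_dblBracket δ hsym hinv,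
    fun _ _ => eq_zero_of_forall_dblPairing_eq_zero δ⟩
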